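/- Let M ⊆ ℤ be a nonempty integer interval and let (λ_k)_{k∈M}, (μ_k)_{k∈M} be interlaced real sequences with no finite accumulation point such that Σ_{k∈M}(μ_k − λ_k) = Δ < ∞. Then for every n ∈ M, lim_{ζ → λ_n, ζ ∉ ℝ} (λ_n − ζ)·F(ζ) = (μ_n − λ_n) · ∏_{k∈M, k≠n} (μ_k − λ_n)/(λ_k − λ_n) = Δ/τ_n, where F(ζ) := ∏_{k∈M} (μ_k − ζ)/(λ_k − ζ). -/

import Mathlib

/-!
Off the real axis each factor is `1 + (μ_k - λ_k) / (λ_k - ζ)`, so `∑ (μ_k - λ_k) < ∞` makes the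
product converge, and multiplying by `λ_n - ζ` cancels the pole of the `n`-th factor, leaving
`(μ_n - ζ) ∏_{k ≠ n} (μ_k - ζ) / (λ_k - ζ)`. Interlacing makes `λ` strictly increasing on `M`, so
the other `λ_k` keep a distance `ε > 0` (the smaller gap to the neighbours of `λ_n`) from `λ_n`.
On the closed disc of radius `ε / 2` about `λ_n` the remaining product then converges uniformly,
with majorant `2 (μ_k - λ_k) / ε`; it is therefore continuous at `λ_n`, where it equals the real
product. The first identity is the definition of `τ_n` rearranged, using `Δ > 0`.
-/

open Filter Topology

open Complex Metric

theorem continuousOn_tprod_one_add {α ι R : Type*} [TopologicalSpace α] [NormedCommRing R]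
    [NormOneClass R] [CompleteSpace R] {f : ι → α → R} {u : ι → ℝ} {K : Set α}
    (hK : IsCompact K) (hu : Summable u) (hfu : ∀ i, ∀ x ∈ K, ‖f i x‖ ≤ u i)
    (hf : ∀ i, ContinuousOn (f i) K) :
    ContinuousOn (fun x ↦ ∏' i, (1 + f i x)) K := by
  have h := hu.hasProdUniformlyOn_one_add hK (.of_forall hfu) hf
  rw [hasProdUniformlyOn_iff_tendstoUniformlyOn] at h
  exact h.continuousOn <| .of_forall fun s ↦
    continuousOn_finsetProd s fun i _ ↦ continuousOn_const.add (hf i)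

theorem tprod_eq_mul_tprod_ne {β α : Type*} [CommMonoid α] [TopologicalSpace α] [ContinuousMul α]
    [T2Space α] {f : β → α} (b : β) (hf : Multipliable fun x : {x // x ≠ b} ↦ f x) :
    ∏' x, f x = f b * ∏' x : {x // x ≠ b}, f x := by
  rw [← ((Set.finite_singleton b).multipliable f).tprod_mul_tprod_compl hf, tprod_singleton]
  rfl

theorem Complex.ofReal_tprod {ι : Type*} (f : ι → ℝ) :
    ((∏' i, f i : ℝ) : ℂ) = ∏' i, (f i : ℂ) :=
  isometry_ofReal.isClosedEmbedding.map_tprod (g := ofRealHom) f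

theorem ofReal_sub_div_ofReal_sub_eq_one_add {l m : ℝ} {ζ : ℂ} (h : (l : ℂ) - ζ ≠ 0) :
    ((m : ℂ) - ζ) / ((l : ℂ) - ζ) = 1 + ((m - l : ℝ) : ℂ) / ((l : ℂ) - ζ) := by
  rw [one_add_div h]
  push_cast
  ring

theorem norm_ofReal_div_le {d r : ℝ} {z : ℂ} (hd : 0 ≤ d) (hr : 0 < r) (hz : r ≤ ‖z‖) :
    ‖(d : ℂ) / z‖ ≤ d / r := by
  rw [norm_div, norm_real, Real.norm_of_nonneg hd]
  gcongr

theorem abs_im_le_norm_ofReal_sub (l : ℝ) (ζ : ℂ) : |ζ.im| ≤ ‖(l : ℂ) - ζ‖ := by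
  simpa using abs_im_le_norm ((l : ℂ) - ζ)

theorem half_le_norm_ofReal_sub {l c ε : ℝ} {ζ : ℂ} (hl : ε ≤ |l - c|)
    (hζ : ζ ∈ closedBall (c : ℂ) (ε / 2)) : ε / 2 ≤ ‖(l : ℂ) - ζ‖ := by
  have hlc : ‖(l : ℂ) - c‖ = |l - c| := by rw [← ofReal_sub, norm_real, Real.norm_eq_abs]
  have := norm_sub_le_norm_sub_add_norm_sub (l : ℂ) ζ c
  rw [mem_closedBall, dist_eq_norm] at hζ
  linarith

section FactorProduct

variable {ι : Type*} {l m : ι → ℝ}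

theorem multipliable_ofReal_sub_div_ofReal_sub (hlm : ∀ i, l i ≤ m i)
    (hs : Summable fun i ↦ m i - l i) {ζ : ℂ} (hζ : ζ.im ≠ 0) :
    Multipliable fun i ↦ ((m i : ℂ) - ζ) / ((l i : ℂ) - ζ) := by
  have him : 0 < |ζ.im| := abs_pos.2 hζ
  have hden : ∀ i, |ζ.im| ≤ ‖(l i : ℂ) - ζ‖ := fun i ↦ abs_im_le_norm_ofReal_sub (l i) ζ
  have hne : ∀ i, (l i : ℂ) - ζ ≠ 0 := fun i ↦ norm_pos_iff.1 (him.trans_le (hden i))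
  simp_rw [ofReal_sub_div_ofReal_sub_eq_one_add (hne _)]
  refine multipliable_one_add_of_summable <| (hs.div_const |ζ.im|).of_nonneg_of_le
    (fun _ ↦ norm_nonneg _) fun i ↦ norm_ofReal_div_le (sub_nonneg.2 (hlm i)) him (hden i)

theorem continuousAt_tprod_ofReal_sub_div_ofReal_sub (hlm : ∀ i, l i ≤ m i)
    (hs : Summable fun i ↦ m i - l i) {c ε : ℝ} (hε : 0 < ε) (hsep : ∀ i, ε ≤ |l i - c|) :
    ContinuousAt (fun ζ : ℂ ↦ ∏' i, ((m i : ℂ) - ζ) / ((l i : ℂ) - ζ)) c := by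
  set K := closedBall (c : ℂ) (ε / 2)
  have hden : ∀ i, ∀ ζ ∈ K, ε / 2 ≤ ‖(l i : ℂ) - ζ‖ := fun i ζ hζ ↦
    half_le_norm_ofReal_sub (hsep i) hζ
  have hne : ∀ i, ∀ ζ ∈ K, (l i : ℂ) - ζ ≠ 0 := fun i ζ hζ ↦
    norm_pos_iff.1 ((half_pos hε).trans_le (hden i ζ hζ))
  have hcont := continuousOn_tprod_one_add (isCompact_closedBall _ _) (hs.div_const (ε / 2))
    (fun i ζ hζ ↦ norm_ofReal_div_le (sub_nonneg.2 (hlm i)) (half_pos hε) (hden i ζ hζ))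
    fun i ↦ continuousOn_const.div (continuousOn_const.sub continuousOn_id) (hne i)
  refine (hcont.congr fun ζ hζ ↦ ?_).continuousAt (closedBall_mem_nhds _ (half_pos hε))
  exact tprod_congr fun i ↦ ofReal_sub_div_ofReal_sub_eq_one_add (hne i ζ hζ)

end FactorProduct

section Interlacing

variable {M : Set ℤ}

theorem strictMonoOn_of_interlaced {lam mu : ℤ → ℝ} (hM : M.OrdConnected)
    (h₁ : ∀ k ∈ M, lam k < mu k) (h₂ : ∀ k : ℤ, k ∈ M → k + 1 ∈ M → mu k < lam (k + 1)) :
    StrictMonoOn lam M :=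
  strictMonoOn_of_lt_add_one hM fun k _ hk hk1 ↦ (h₁ k hk).trans (h₂ k hk hk1)

theorem StrictMonoOn.exists_pos_le_abs_sub {f : ℤ → ℝ} (hM : M.OrdConnected)
    (hf : StrictMonoOn f M) {n : ℤ} (hn : n ∈ M) :
    ∃ ε > 0, ∀ k ∈ M, k ≠ n → ε ≤ |f k - f n| := by
  obtain ⟨a, ha, hup⟩ : ∃ a > 0, ∀ k ∈ M, n < k → a ≤ f k - f n := by
    by_cases h : n + 1 ∈ M
    · refine ⟨f (n + 1) - f n, sub_pos.2 (hf hn h (lt_add_one n)), fun k hk hnk ↦ ?_⟩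
      linarith [hf.monotoneOn h hk (by omega)]
    · exact ⟨1, one_pos, fun k hk hnk ↦ absurd (hM.out hn hk ⟨by omega, by omega⟩) h⟩
  obtain ⟨b, hb, hdown⟩ : ∃ b > 0, ∀ k ∈ M, k < n → b ≤ f n - f k := by
    by_cases h : n - 1 ∈ M
    · refine ⟨f n - f (n - 1), sub_pos.2 (hf h hn (sub_one_lt n)), fun k hk hkn ↦ ?_⟩
      linarith [hf.monotoneOn hk h (by omega)]
    · exact ⟨1, one_pos, fun k hk hkn ↦ absurd (hM.out hk hn ⟨by omega, by omega⟩) h⟩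
  refine ⟨min a b, lt_min ha hb, fun k hk hkn ↦ ?_⟩
  rcases hkn.lt_or_gt with h | h
  · rw [abs_sub_comm, abs_of_pos (sub_pos.2 (hf hk hn h))]
    exact (min_le_right a b).trans (hdown k hk h)
  · rw [abs_of_pos (sub_pos.2 (hf hn hk h))]
    exact (min_le_left a b).trans (hup k hk h)

end Interlacing

section Residue

variable {ι : Type*} {M : Set ι} {l m : ι → ℝ} {n : ι}

theorem ofReal_sub_mul_tprod_eq_mul_tprod_ne (hn : n ∈ M) (hlm : ∀ k ∈ M, l k ≤ m k)
    (hs : Summable fun k : M ↦ m k - l k) {ζ : ℂ} (hζ : ζ.im ≠ 0) :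
    ((l n : ℂ) - ζ) * ∏' k : M, ((m k : ℂ) - ζ) / ((l k : ℂ) - ζ) =
      ((m n : ℂ) - ζ) * ∏' k : {k : M // (k : ι) ≠ n}, ((m k : ℂ) - ζ) / ((l k : ℂ) - ζ) := by
  have hne : (l n : ℂ) - ζ ≠ 0 := fun h ↦ hζ (by simpa using congrArg im h)
  have hmult := multipliable_ofReal_sub_div_ofReal_sub
    (l := fun k : {k : M // k ≠ ⟨n, hn⟩} ↦ l k) (m := fun k ↦ m k) (fun k ↦ hlm k k.1.2)
    (hs.subtype _) hζ
  have hreindex : ∏' k : {k : M // k ≠ ⟨n, hn⟩}, ((m k : ℂ) - ζ) / ((l k : ℂ) - ζ) =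
      ∏' k : {k : M // (k : ι) ≠ n}, ((m k : ℂ) - ζ) / ((l k : ℂ) - ζ) :=
    ((Equiv.subtypeEquivRight fun k : M ↦ Subtype.coe_ne_coe (b := ⟨n, hn⟩)).tprod_eq
      fun k ↦ ((m k : ℂ) - ζ) / ((l k : ℂ) - ζ)).symm
  rw [tprod_eq_mul_tprod_ne (f := fun k : M ↦ ((m k : ℂ) - ζ) / ((l k : ℂ) - ζ)) _ hmult,
    hreindex]
  field_simp

theorem tendsto_ofReal_sub_mul_tprod (hn : n ∈ M) (hlm : ∀ k ∈ M, l k ≤ m k)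
    (hs : Summable fun k : M ↦ m k - l k) {ε : ℝ} (hε : 0 < ε)
    (hsep : ∀ k ∈ M, k ≠ n → ε ≤ |l k - l n|) :
    Tendsto (fun ζ : ℂ ↦ ((l n : ℂ) - ζ) * ∏' k : M, ((m k : ℂ) - ζ) / ((l k : ℂ) - ζ))
      (𝓝[{ζ : ℂ | ζ.im ≠ 0}] (l n : ℂ))
      (𝓝 (((m n - l n) * ∏' k : {k : M // (k : ι) ≠ n}, (m k - l n) / (l k - l n) : ℝ) : ℂ)) := by
  have hcont := continuousAt_tprod_ofReal_sub_div_ofReal_sub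
    (l := fun k : {k : M // (k : ι) ≠ n} ↦ l k) (m := fun k ↦ m k) (fun k ↦ hlm k k.1.2)
    (hs.subtype _) hε fun k ↦ hsep k k.1.2 k.2
  have hlim := ((continuousAt_const (y := (m n : ℂ))).sub continuousAt_id).mul hcont
  push_cast [ofReal_tprod]
  refine hlim.tendsto.mono_left nhdsWithin_le_nhds |>.congr'
    (eventually_nhdsWithin_of_forall fun ζ hζ ↦ ?_)
  exact (ofReal_sub_mul_tprod_eq_mul_tprod_ne hn hlm hs hζ).symm

end Residue

theorem two_spectra_residue_general
    (M : Set ℤ)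
    (hMint : ∀ a b c : ℤ, a ∈ M → c ∈ M → a ≤ b → b ≤ c → b ∈ M)
    (lam mu : ℤ → ℝ)
    (hinter₁ : ∀ k ∈ M, lam k < mu k)
    (hinter₂ : ∀ k : ℤ, k ∈ M → k + 1 ∈ M → mu k < lam (k + 1))
    (Δ : ℝ)
    (hsum : HasSum (fun k : M => mu (k : ℤ) - lam (k : ℤ)) Δ)
    (τ : ℤ → ℝ)
    (hτ : ∀ n ∈ M,
      (τ n)⁻¹ = (mu n - lam n) / Δ *
        ∏' k : {k : M // (k : ℤ) ≠ n},
          (mu ((k : M) : ℤ) - lam n) / (lam ((k : M) : ℤ) - lam n)) :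
    ∀ n ∈ M,
      (mu n - lam n) *
          ∏' k : {k : M // (k : ℤ) ≠ n},
            (mu ((k : M) : ℤ) - lam n) / (lam ((k : M) : ℤ) - lam n) = Δ / τ n ∧
      Tendsto
        (fun ζ : ℂ =>
          ((lam n : ℂ) - ζ) * ∏' k : M, ((mu (k : ℤ) : ℂ) - ζ) / ((lam (k : ℤ) : ℂ) - ζ))
        (𝓝[{ζ : ℂ | ζ.im ≠ 0}] (lam n : ℂ))
        (𝓝 ((Δ / τ n : ℝ) : ℂ)) := by
  intro n hn
  have hlm : ∀ k ∈ M, lam k ≤ mu k := fun k hk ↦ (hinter₁ k hk).le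
  have hΔ : 0 < Δ := (sub_pos.2 (hinter₁ n hn)).trans_le
    (le_hasSum hsum ⟨n, hn⟩ fun k _ ↦ sub_nonneg.2 (hlm k k.2))
  have hresidue : (mu n - lam n) * ∏' k : {k : M // (k : ℤ) ≠ n},
      (mu ((k : M) : ℤ) - lam n) / (lam ((k : M) : ℤ) - lam n) = Δ / τ n := by
    rw [div_eq_mul_inv, hτ n hn]
    field_simp
  have hM : M.OrdConnected := ⟨fun a ha c hc b hb ↦ hMint a b c ha hc hb.1 hb.2⟩
  obtain ⟨ε, hε, hsep⟩ :=
    (strictMonoOn_of_interlaced hM hinter₁ hinter₂).exists_pos_le_abs_sub hM hn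
  refine ⟨hresidue, ?_⟩
  rw [← hresidue]
  exact tendsto_ofReal_sub_mul_tprod hn hlm hsum.summable hε hsep

/-- With F(ζ) = ∏_{k∈M} (μ_k − ζ)/(λ_k − ζ) and τ_n defined by
τ_n⁻¹ = ((μ_n − λ_n)/Δ) ∏_{k≠n} (μ_k − λ_n)/(λ_k − λ_n), for every n ∈ M one has
lim_{ζ → λ_n, ζ ∉ ℝ} (λ_n − ζ)·F(ζ) = (μ_n − λ_n) ∏_{k≠n} (μ_k − λ_n)/(λ_k − λ_n) = Δ/τ_n. -/
theorem two_spectra_residue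
    (M : Set ℤ) (hM : M.Nonempty)
    (hMint : ∀ a b c : ℤ, a ∈ M → c ∈ M → a ≤ b → b ≤ c → b ∈ M)
    (lam mu : ℤ → ℝ)
    (hinter₁ : ∀ k ∈ M, lam k < mu k)
    (hinter₂ : ∀ k : ℤ, k ∈ M → k + 1 ∈ M → mu k < lam (k + 1))
    (hacc : ∀ R : ℝ, 0 < R → {k ∈ M | |lam k| ≤ R}.Finite)
    (Δ : ℝ)
    (hsum : HasSum (fun k : M => mu (k : ℤ) - lam (k : ℤ)) Δ)
    (τ : ℤ → ℝ)
    (hτ : ∀ n ∈ M,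
      (τ n)⁻¹ = (mu n - lam n) / Δ *
        ∏' k : {k : M // (k : ℤ) ≠ n},
          (mu ((k : M) : ℤ) - lam n) / (lam ((k : M) : ℤ) - lam n)) :
    ∀ n ∈ M,
      (mu n - lam n) *
          ∏' k : {k : M // (k : ℤ) ≠ n},
            (mu ((k : M) : ℤ) - lam n) / (lam ((k : M) : ℤ) - lam n) = Δ / τ n ∧
      Tendsto
        (fun ζ : ℂ =>
          ((lam n : ℂ) - ζ) * ∏' k : M, ((mu (k : ℤ) : ℂ) - ζ) / ((lam (k : ℤ) : ℂ) - ζ))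
        (𝓝[{ζ : ℂ | ζ.im ≠ 0}] (lam n : ℂ))
        (𝓝 ((Δ / τ n : ℝ) : ℂ)) :=
  two_spectra_residue_general M hMint lam mu hinter₁ hinter₂ Δ hsum τ hτ
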